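/- Let 𝒯 be a supercritical CA and u a unit vector. Suppose x_u^r ∈ ℓ_u ∩ 𝒩 is such that, for some α > 0, every line ℓ obtained from ℓ_u by a rotation about x_u^r through an angle in (0, α) satisfies π_d(ℒ⁻(ℓ)) = 1 and π_d(ℒ°(ℓ)) = 0. Then there exists β > 0 such that whenever v₁ is the rotation of u by an angle in (0, β), the convex wedge W⁺ = H_u⁻ ∩ H_{v₁}⁻ is invariant: 𝒯̄(W⁺) = −x_u^r + W⁺. Symmetrically, if x_u^ℓ ∈ ℓ_u ∩ 𝒩 has the analogous property for rotations through angles in (−α, 0), then for v₂ a rotation of u by a sufficiently small negative angle, the convex wedge W⁻ = H_u⁻ ∩ H_{v₂}⁻ satisfies 𝒯̄(W⁻) = −x_u^ℓ + W⁻. -/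

import Mathlib

open MeasureTheory ProbabilityTheory Filter Topology Set
open scoped Pointwise ENNReal

noncomputable section

abbrev Pt : Type := EuclideanSpace ℝ (Fin 2)

def mkPt (a b : ℝ) : Pt := (WithLp.equiv 2 (Fin 2 → ℝ)).symm ![a, b]

def toPt (z : ℤ × ℤ) : Pt := mkPt z.1 z.2

def lattice : Set Pt := Set.range toPt

structure CA where
  N : Set Pt
  finite : N.Finite
  subLat : N ⊆ lattice
  zeroMem : (0 : Pt) ∈ N
  negN : -N = N
  rule : Set Pt → Prop
  mono : ∀ ⦃S₁ S₂ : Set Pt⦄, S₁ ⊆ S₂ → rule S₁ → rule S₂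
  notEmpty : ¬ rule ∅
  ruleSymm : ∀ S : Set Pt, rule (-S) ↔ rule S
  solid : ∀ S : Set Pt, (0 : Pt) ∈ S → rule S

def CA.T (c : CA) (A : Set Pt) : Set Pt :=
  {x | x ∈ lattice ∧ c.rule (((fun a => a - x) '' A) ∩ c.N)}

def CA.Tbar (c : CA) (B : Set Pt) : Set Pt :=
  {x | c.rule ((((fun a => a - x) '' B) ∩ lattice) ∩ c.N)}

def Hminus (u : Pt) : Set Pt := {x | (inner ℝ x u : ℝ) ≤ 0}

def shiftSet (v : Pt) (S : Set Pt) : Set Pt := (fun x => x + v) '' S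

def IsSpeed (c : CA) (w : Pt → ℝ) : Prop :=
  ∀ u : Pt, ‖u‖ = 1 → c.Tbar (Hminus u) = shiftSet (w u • u) (Hminus u)

def Supercritical (w : Pt → ℝ) : Prop := ∀ u : Pt, ‖u‖ = 1 → 0 < w u

def FillsSpace (c : CA) (A : Set Pt) : Prop :=
  A ⊆ lattice ∧ ∀ x ∈ lattice, ∃ t : ℕ, x ∈ c.T^[t] A

def LocallyRegular (c : CA) : Prop :=
  ∀ A₀ : Set Pt, A₀.Finite → A₀ ⊆ lattice → ∃ C : ℝ, 0 < C ∧
    ∀ A : ℕ → Set Pt, A 0 = A₀ →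
      (∀ s, A s ⊆ A (s + 1)) → (∀ s, A (s + 1) ⊆ A s ∪ c.T (A s)) →
      ∀ t : ℕ, ∀ x ∈ A t, (∀ y ∈ A₀, C ≤ dist x y) →
        ∃ G : Set Pt, G.Finite ∧ G ⊆ A t ∧ G ⊆ Metric.closedBall x C ∧ FillsSpace c G

structure Perturbation (c : CA) where
  pr : Set Pt → ℝ
  nonneg : ∀ S, 0 ≤ pr S
  le_one : ∀ S, pr S ≤ 1
  mono : ∀ ⦃S₁ S₂ : Set Pt⦄, S₁ ⊆ S₂ → pr S₁ ≤ pr S₂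
  empty : pr ∅ = 0
  prSymm : ∀ S, pr (-S) = pr S
  solid : ∀ S : Set Pt, (0 : Pt) ∈ S → pr S = 1
  p : ℝ
  p_pos : 0 < p
  p_min : ∀ S : Set Pt, S ⊆ c.N → 0 < pr S → p ≤ pr S
  p_attained : ∃ S : Set Pt, S ⊆ c.N ∧ pr S = p
  compat : ∀ S : Set Pt, S ⊆ c.N → (c.rule S ↔ 0 < pr S)

def IsUniformIID {Ω : Type*} [MeasureSpace Ω] (U : ((ℤ × ℤ) × ℕ) → Ω → ℝ) : Prop :=
  (∀ i, Measurable (U i)) ∧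
  iIndepFun U ℙ ∧
  ∀ i, Measure.map (U i) ℙ = volume.restrict (Set.Icc (0 : ℝ) 1)

def IsDyn {Ω : Type*} (c : CA) (P : Perturbation c) (U : ((ℤ × ℤ) × ℕ) → Ω → ℝ)
    (A : ℕ → Ω → Set Pt) : Prop :=
  ∀ ω t, A (t + 1) ω =
    {x | ∃ z : ℤ × ℤ, toPt z = x ∧
      U (z, t) ω ≤ P.pr (((fun a => a - x) '' A t ω) ∩ c.N)}

def IsStdDyn {Ω : Type*} (c : CA) (p : ℝ) (U : ((ℤ × ℤ) × ℕ) → Ω → ℝ)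
    (A : ℕ → Ω → Set Pt) : Prop :=
  ∀ ω t, A (t + 1) ω =
    A t ω ∪ {x | x ∈ c.T (A t ω) ∧ ∃ z : ℤ × ℤ, toPt z = x ∧ U (z, t) ω ≤ p}

def SpeedEvent (u : Pt) (wu ε : ℝ) (t : ℕ) (At : Set Pt) : Prop :=
  shiftSet (((t : ℝ) * (wu - ε)) • u) (Hminus u) ∩ lattice ∩
      Metric.closedBall 0 ((t : ℝ) ^ 2) ⊆ At ∧
  At ∩ Metric.closedBall 0 ((t : ℝ) ^ 2) ⊆
      shiftSet (((t : ℝ) * (wu + ε)) • u) (Hminus u)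

def Lset (w : Pt → ℝ) : Set Pt := {x | ∀ u : Pt, ‖u‖ = 1 → (inner ℝ x u : ℝ) ≤ w u}

def Kset (w : Pt → ℝ) : Set Pt :=
  {x | ∃ u : Pt, ‖u‖ = 1 ∧ ∃ r : ℝ, 0 ≤ r ∧ r ≤ (w u)⁻¹ ∧ x = r • u}

def dKp (w : Pt → ℝ) : Set Pt :=
  frontier (Kset w) ∩ frontier (convexHull ℝ (Kset w))

def lineu (w : Pt → ℝ) (u : Pt) : Set Pt := {x | (inner ℝ x u : ℝ) = -(w u)}

def rot (β : ℝ) (v : Pt) : Pt :=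
  mkPt (Real.cos β * v 0 - Real.sin β * v 1) (Real.sin β * v 0 + Real.cos β * v 1)

def lineSet (q n : Pt) : Set Pt := {x | (inner ℝ (x - q) n : ℝ) = 0}

def farOpen (Nset : Set Pt) (q n : Pt) : Set Pt :=
  {x ∈ Nset | 0 < (inner ℝ (x - q) n : ℝ) * (inner ℝ q n : ℝ)}

def farClosed (Nset : Set Pt) (q n : Pt) : Set Pt :=
  {x ∈ Nset | 0 ≤ (inner ℝ (x - q) n : ℝ) * (inner ℝ q n : ℝ)}

def HasLDSpeed (c : CA) (P : Perturbation c) (wpi : Pt → ℝ) : Prop :=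
  ∀ u : Pt, ‖u‖ = 1 → 0 < wpi u ∧
    ∀ (Ω : Type) [MeasureSpace Ω] [IsProbabilityMeasure (ℙ : Measure Ω)]
      (U : ((ℤ × ℤ) × ℕ) → Ω → ℝ), IsUniformIID U →
      ∀ A : ℕ → Ω → Set Pt, IsDyn c P U A → A 0 = (fun _ => Hminus u ∩ lattice) →
      ∀ ε : ℝ, 0 < ε → ∃ cε : ℝ, 0 < cε ∧ ∀ t : ℕ, 1 ≤ t →
        ENNReal.ofReal (1 - Real.exp (-cε * t)) ≤ ℙ {ω | SpeedEvent u (wpi u) ε t (A t ω)}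

def ext (M : ℤ) (κ : ℝ) (A : Set (ℤ × ℤ)) : Set (ℤ × ℤ) :=
  {q | (0 ≤ q.1 ∧ q.1 ≤ M - 1 ∧ q ∈ A) ∨
       (M ≤ q.1 ∧ q.1 ≤ 2 * M - 1 ∧ (q.1 - M, ⌊(q.2 : ℝ) - κ * M⌋) ∈ A) ∨
       (-M ≤ q.1 ∧ q.1 < 0 ∧ (q.1 + M, ⌊(q.2 : ℝ) + κ * M⌋) ∈ A)}

def IsStripDyn {Ω : Type*} (c : CA) (P : Perturbation c) (M : ℤ) (κ : ℝ)
    (U : ((ℤ × ℤ) × ℕ) → Ω → ℝ) (A : ℕ → Ω → Set (ℤ × ℤ)) : Prop :=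
  ∀ ω t, A (t + 1) ω =
    {q | 0 ≤ q.1 ∧ q.1 ≤ M - 1 ∧
      U (q, t) ω ≤ P.pr ((toPt '' ((fun r => r - q) '' ext M κ (A t ω))) ∩ c.N)}

def hgt1 (A : Set (ℤ × ℤ)) (M : ℤ) (κ : ℝ) : ℝ :=
  sSup {r : ℝ | ∃ q ∈ A, 0 ≤ q.1 ∧ q.1 ≤ M - 1 ∧ r = κ * q.1 + q.2}

def hgt0 (A : Set (ℤ × ℤ)) (M : ℤ) (κ : ℝ) : ℝ :=
  sInf {r : ℝ | ∃ q : ℤ × ℤ, q ∉ A ∧ 0 ≤ q.1 ∧ q.1 ≤ M - 1 ∧ r = κ * q.1 + q.2}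

def boxN (ρ : ℕ) : Finset (ℤ × ℤ) := Finset.Icc (-(ρ : ℤ), -(ρ : ℤ)) ((ρ : ℤ), (ρ : ℤ))

def cutCard (ρ : ℕ) (a b cc : ℝ) : ℕ :=
  ((boxN ρ).filter (fun y => cc ≤ a * y.1 + b * y.2)).card

def lamSet (ρ : ℕ) (x : ℤ × ℤ) : Set ℕ :=
  {n | ∃ a b cc : ℝ, ¬(a = 0 ∧ b = 0) ∧ 0 < cc ∧ a * x.1 + b * x.2 = cc ∧ n = cutCard ρ a b cc}

def lamStar (ρ : ℕ) (x : ℤ × ℤ) : ℕ := sInf (lamSet ρ x)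

open scoped Classical in
def IsSlowSurface {Ω : Type*} (b : ℤ × ℕ → Ω → Bool) (η : ℕ → Ω → ℤ → ℕ) : Prop :=
  (∀ ω x, η 0 ω x = 0) ∧
  ∀ ω t x, η (t + 1) ω x =
    if b (x, t) ω = true ∧ ∀ y : ℤ, |y - x| ≤ 1 → η t ω x ≤ η t ω y
    then η t ω x + 1 else η t ω x

open scoped Classical in
def IsFastSurface {Ω : Type*} (b : ℤ × ℕ → Ω → Bool) (η : ℕ → Ω → ℤ → ℕ) : Prop :=
  (∀ ω x, η 0 ω x = 0) ∧
  ∀ ω t x, η (t + 1) ω x =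
    if b (x, t) ω = true ∨ ∃ y : ℤ, |y - x| ≤ 1 ∧ η t ω x < η t ω y
    then η t ω x + 1 else η t ω x

def AdmissibleField {Ω : Type*} [MeasureSpace Ω] (p' : ℝ) (r : ℕ)
    (b : ℤ × ℕ → Ω → Bool) : Prop :=
  (∀ i, Measurable (b i)) ∧
  (∀ i, ℙ {ω | b i ω = true} = ENNReal.ofReal p') ∧
  ∀ I : Finset (ℤ × ℕ),
    (∀ i ∈ I, ∀ j ∈ I, i ≠ j → i.2 ≠ j.2 ∨ (r : ℤ) < |i.1 - j.1|) →
    iIndepFun (fun i : I => b i.1) ℙ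

/-!
Let `q = x_u^r` and `v = rot γ u`. For small `γ` we still have `⟪q, v⟫ < 0`, and no point `z` of
the finite neighbourhood changes the strict sign of `⟪z - q, ·⟫` when `u` is replaced by `v`.
Let `W = H_u⁻ ∩ H_v⁻`. If `x + q ∈ W`, every `z ∈ 𝒩` with `⟪z - q, v⟫ ≤ 0` also has
`⟪z - q, u⟫ ≤ 0`, so `z + x ∈ W`: thus `W - x` contains `ℒ⁻`, and `π_d(ℒ⁻) = 1` puts `x` in `𝒯̄(W)`.
If `x + q ∉ W`, every `z ∈ (W - x) ∩ 𝒩` has `⟪z - q, v⟫ < 0`, so it lies in `ℒ°`, and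
`π_d(ℒ°) = 0` keeps `x` out of `𝒯̄(W)`.
-/

open scoped RealInnerProductSpace

lemma rot_eq (β : ℝ) (v : Pt) :
    rot β v = Real.cos β • v + Real.sin β • mkPt (-(v 1)) (v 0) := by
  unfold rot mkPt
  ext i
  fin_cases i <;> simp <;> ring

lemma tendsto_rot_nhds_zero (v : Pt) : Tendsto (fun β => rot β v) (𝓝 0) (𝓝 v) := by
  have hcont : Continuous fun β => rot β v := by simp_rw [rot_eq]; fun_prop
  simpa [rot_eq] using hcont.tendsto 0

lemma mem_Hminus {x u : Pt} : x ∈ Hminus u ↔ ⟪x, u⟫ ≤ 0 := Iff.rfl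

section SignStability

variable {ι : Type*} {l : Filter ι} {f : ι → ℝ} {a : ℝ}

lemma Filter.Tendsto.eventually_neg_of_neg (hf : Tendsto f l (𝓝 a)) :
    ∀ᶠ i in l, a < 0 → f i < 0 := by
  by_cases ha : a < 0
  · exact (hf.eventually_lt_const ha).mono fun _ hi _ => hi
  · exact Eventually.of_forall fun _ ha' => absurd ha' ha

lemma Filter.Tendsto.eventually_pos_of_pos (hf : Tendsto f l (𝓝 a)) :
    ∀ᶠ i in l, 0 < a → 0 < f i := by
  by_cases ha : 0 < a
  · exact (hf.eventually_const_lt ha).mono fun _ hi _ => hi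
  · exact Eventually.of_forall fun _ ha' => absurd ha' ha

lemma eventually_inner_sign_stable {S : Set Pt} (hS : S.Finite) (q u : Pt) {n : ι → Pt}
    (hn : Tendsto n l (𝓝 u)) :
    ∀ᶠ i in l, ∀ z ∈ S, (⟪z - q, u⟫ < 0 → ⟪z - q, n i⟫ < 0) ∧
      (0 < ⟪z - q, u⟫ → 0 < ⟪z - q, n i⟫) := by
  refine (eventually_all_finite hS).2 fun z _ => ?_
  have hz : Tendsto (fun i => ⟪z - q, n i⟫) l (𝓝 ⟪z - q, u⟫) :=
    tendsto_const_nhds.inner hn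
  exact hz.eventually_neg_of_neg.and hz.eventually_pos_of_pos

end SignStability

section Wedge

variable (c : CA) {q u v : Pt}

theorem CA.Tbar_wedge_subset (hqv : ⟪q, v⟫ < 0)
    (hneg : ∀ z ∈ c.N, ⟪z - q, u⟫ < 0 → ⟪z - q, v⟫ < 0)
    (hopen : ¬ c.rule (farOpen c.N q v)) :
    c.Tbar (Hminus u ∩ Hminus v) ⊆ (fun x => x - q) '' (Hminus u ∩ Hminus v) := by
  intro x hx
  by_contra hxq
  have hout : ⟪x + q, u⟫ ≤ 0 → 0 < ⟪x + q, v⟫ := fun hu =>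
    lt_of_not_ge fun hv => hxq ⟨x + q, ⟨hu, hv⟩, add_sub_cancel_right x q⟩
  refine hopen (c.mono ?_ hx)
  rintro _ ⟨⟨⟨y, ⟨hyu, hyv⟩, rfl⟩, -⟩, hzN⟩
  have hsplit : ∀ n, ⟪y - x - q, n⟫ = ⟪y, n⟫ - ⟪x + q, n⟫ := fun n => by
    rw [sub_sub, inner_sub_left]
  rw [mem_Hminus] at hyu hyv
  refine ⟨hzN, mul_pos_of_neg_of_neg ?_ hqv⟩
  rcases le_or_gt ⟪x + q, u⟫ 0 with hu | hu
  · linarith [hsplit v, hout hu]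
  · exact hneg _ hzN (by linarith [hsplit u])

theorem CA.wedge_sub_subset_Tbar (hqv : ⟪q, v⟫ < 0)
    (hpos : ∀ z ∈ c.N, 0 < ⟪z - q, u⟫ → 0 < ⟪z - q, v⟫)
    (hclosed : c.rule (farClosed c.N q v)) :
    (fun x => x - q) '' (Hminus u ∩ Hminus v) ⊆ c.Tbar (Hminus u ∩ Hminus v) := by
  rintro _ ⟨y, ⟨hyu, hyv⟩, rfl⟩
  refine c.mono ?_ hclosed
  rintro z ⟨hzN, hz⟩
  have hzv : ⟪z - q, v⟫ ≤ 0 := nonpos_of_mul_nonneg_left hz hqv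
  have hzu : ⟪z - q, u⟫ ≤ 0 := le_of_not_gt fun h => (hpos z hzN h).not_ge hzv
  have hsplit : ∀ n, ⟪z + (y - q), n⟫ = ⟪z - q, n⟫ + ⟪y, n⟫ := fun n => by
    rw [show z + (y - q) = (z - q) + y by abel, inner_add_left]
  refine ⟨⟨⟨z + (y - q), ⟨?_, ?_⟩, add_sub_cancel_right z (y - q)⟩, c.subLat hzN⟩, hzN⟩
  · rw [mem_Hminus] at hyu ⊢; linarith [hsplit u]
  · rw [mem_Hminus] at hyv ⊢; linarith [hsplit v]

theorem CA.Tbar_wedge_eq (hqv : ⟪q, v⟫ < 0)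
    (hsign : ∀ z ∈ c.N, (⟪z - q, u⟫ < 0 → ⟪z - q, v⟫ < 0) ∧
      (0 < ⟪z - q, u⟫ → 0 < ⟪z - q, v⟫))
    (hclosed : c.rule (farClosed c.N q v)) (hopen : ¬ c.rule (farOpen c.N q v)) :
    c.Tbar (Hminus u ∩ Hminus v) = (fun x => x - q) '' (Hminus u ∩ Hminus v) :=
  (c.Tbar_wedge_subset hqv (fun z hz => (hsign z hz).1) hopen).antisymm
    (c.wedge_sub_subset_Tbar hqv (fun z hz => (hsign z hz).2) hclosed)

theorem CA.exists_Tbar_wedge_rot_eq (hqu : ⟪q, u⟫ < 0) :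
    ∃ ε > 0, ∀ γ : ℝ, |γ| < ε → c.rule (farClosed c.N q (rot γ u)) →
      ¬ c.rule (farOpen c.N q (rot γ u)) →
      c.Tbar (Hminus u ∩ Hminus (rot γ u)) = (fun x => x - q) '' (Hminus u ∩ Hminus (rot γ u)) := by
  have hrot := tendsto_rot_nhds_zero u
  have hnear := ((tendsto_const_nhds.inner hrot).eventually_lt_const hqu).and
    (eventually_inner_sign_stable c.finite q u hrot)
  obtain ⟨ε, hε, hball⟩ := Metric.eventually_nhds_iff.1 hnear
  refine ⟨ε, hε, fun γ hγ hclosed hopen => ?_⟩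
  obtain ⟨hqv, hsign⟩ := hball (by rwa [Real.dist_0_eq_abs])
  exact c.Tbar_wedge_eq hqv hsign hclosed hopen

end Wedge

theorem stmt17_general (c : CA) (w : Pt → ℝ) (hsc : Supercritical w)
    (u : Pt) (hu : ‖u‖ = 1) :
    (∀ xr ∈ lineu w u ∩ c.N, ∀ α : ℝ, 0 < α →
      (∀ β : ℝ, 0 < β → β < α →
        c.rule (farClosed c.N xr (rot β u)) ∧ ¬ c.rule (farOpen c.N xr (rot β u))) →
      ∃ βb : ℝ, 0 < βb ∧ ∀ γ : ℝ, 0 < γ → γ < βb →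
        c.Tbar (Hminus u ∩ Hminus (rot γ u)) =
          (fun x => x - xr) '' (Hminus u ∩ Hminus (rot γ u))) ∧
    (∀ xl ∈ lineu w u ∩ c.N, ∀ α : ℝ, 0 < α →
      (∀ β : ℝ, -α < β → β < 0 →
        c.rule (farClosed c.N xl (rot β u)) ∧ ¬ c.rule (farOpen c.N xl (rot β u))) →
      ∃ βb : ℝ, 0 < βb ∧ ∀ γ : ℝ, -βb < γ → γ < 0 →
        c.Tbar (Hminus u ∩ Hminus (rot γ u)) =
          (fun x => x - xl) '' (Hminus u ∩ Hminus (rot γ u))) := by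
  have hline : ∀ x ∈ lineu w u ∩ c.N, ⟪x, u⟫ < 0 := fun x hx => by
    have hx' : ⟪x, u⟫ = -w u := hx.1
    linarith [hsc u hu]
  constructor
  · intro xr hxr α hα hrules
    obtain ⟨ε, hε, hwedge⟩ := c.exists_Tbar_wedge_rot_eq (hline xr hxr)
    refine ⟨min α ε, lt_min hα hε, fun γ hγ hγβ => ?_⟩
    have hγ' := lt_min_iff.1 hγβ
    exact hwedge γ ((abs_of_pos hγ).trans_lt hγ'.2) (hrules γ hγ hγ'.1).1 (hrules γ hγ hγ'.1).2
  · intro xl hxl α hα hrules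
    obtain ⟨ε, hε, hwedge⟩ := c.exists_Tbar_wedge_rot_eq (hline xl hxl)
    refine ⟨min α ε, lt_min hα hε, fun γ hγβ hγ => ?_⟩
    have hγ' := neg_lt.1 hγβ |> lt_min_iff.1
    have hα' : -α < γ := neg_lt.2 hγ'.1
    exact hwedge γ ((abs_of_neg hγ).trans_lt hγ'.2) (hrules γ hα' hγ).1 (hrules γ hα' hγ).2

theorem stmt17 (c : CA) (w : Pt → ℝ) (hw : IsSpeed c w) (hsc : Supercritical w)
    (u : Pt) (hu : ‖u‖ = 1) :
    (∀ xr ∈ lineu w u ∩ c.N, ∀ α : ℝ, 0 < α →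
      (∀ β : ℝ, 0 < β → β < α →
        c.rule (farClosed c.N xr (rot β u)) ∧ ¬ c.rule (farOpen c.N xr (rot β u))) →
      ∃ βb : ℝ, 0 < βb ∧ ∀ γ : ℝ, 0 < γ → γ < βb →
        c.Tbar (Hminus u ∩ Hminus (rot γ u)) =
          (fun x => x - xr) '' (Hminus u ∩ Hminus (rot γ u))) ∧
    (∀ xl ∈ lineu w u ∩ c.N, ∀ α : ℝ, 0 < α →
      (∀ β : ℝ, -α < β → β < 0 →
        c.rule (farClosed c.N xl (rot β u)) ∧ ¬ c.rule (farOpen c.N xl (rot β u))) →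
      ∃ βb : ℝ, 0 < βb ∧ ∀ γ : ℝ, -βb < γ → γ < 0 →
        c.Tbar (Hminus u ∩ Hminus (rot γ u)) =
          (fun x => x - xl) '' (Hminus u ∩ Hminus (rot γ u))) :=
  stmt17_general c w hsc u hu

end
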